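/- For the honeycomb (brick-wall) torus with N a positive multiple of 4, let ψ' be any n-qubit state supported on the face code C_face (ψ' x = 0 for x ∉ C_face) whose nonzero amplitudes all have constant modulus, |ψ' x| = |C_face|^{−1/2} for x ∈ C_face. Then Λ_max(ψ') = |C_face|^{−1/2} and E_G(ψ') = n_p − 1, where n_p = N²/2. In particular the ground state |+,+⟩_DS of the double semion model — whose amplitudes in the local {|+⟩,|−⟩} product basis equal (−1)^{X_c}·|C_face|^{−1/2} on C_face, where X_c counts the loops formed by spins in the |−⟩ state — has geometric entanglement of spins E_G = n_p − 1. (The double semion Theorem of Sec. V.) -/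

import Mathlib

/-!
A product state `Φ = ⊗ φₑ` has, by the triangle inequality, overlap at most
`|C|^{-1/2} ∑_{x ∈ C} ∏ₑ |φₑ(xₑ)|` with `ψ'`. Split the edges into two classes, the horizontal
edges at even vertices together with the vertical edges off row `0`, and the remaining edges.
A face-code word is determined by its restriction to either class, because a face labelling
whose boundary vanishes on one class is invariant under two translations that connect all faces,
hence constant, and constant labellings have zero boundary. So Cauchy–Schwarz across the split,
together with `∑_y ∏_{e ∈ A} |φₑ(yₑ)|² = 1` over all assignments `y` of a class `A`, bounds the
sum by `1`; the basis state `|0…0⟩` attains the bound. The same kernel computation gives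
`dim C_face = n_p - 1`.
-/

open scoped BigOperators
open scoped Classical

noncomputable section

namespace GeomEnt

def qInner {ι : Type} [Fintype ι] (φ ψ : (ι → ZMod 2) → ℂ) : ℂ :=
  ∑ x : ι → ZMod 2, (starRingEnd ℂ) (φ x) * ψ x

def IsProductState {ι : Type} [Fintype ι] (Φ : (ι → ZMod 2) → ℂ) : Prop :=
  ∃ φ : ι → ZMod 2 → ℂ,
    (∀ i, ‖φ i 0‖ ^ 2 + ‖φ i 1‖ ^ 2 = 1) ∧
    ∀ x, Φ x = ∏ i, φ i (x i)

def LambdaMax {ι : Type} [Fintype ι] (ψ : (ι → ZMod 2) → ℂ) : ℝ :=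
  sSup { r : ℝ | ∃ Φ, IsProductState Φ ∧ r = ‖qInner Φ ψ‖ }

def EG {ι : Type} [Fintype ι] (ψ : (ι → ZMod 2) → ℂ) : ℝ :=
  - Real.logb 2 (LambdaMax ψ ^ 2)

/-- Vertices of the N × N brick-wall (honeycomb) torus. -/
abbrev HVertex (N : ℕ) := ZMod N × ZMod N

/-- Edges of the brick-wall honeycomb torus. -/
abbrev HEdge (N : ℕ) := HVertex N ⊕ { p : HVertex N // Even (p.1.val + p.2.val) }

/-- Indicator vector of the boundary of the hexagonal face F(i,j) (for i+j even). -/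
def faceBd (N : ℕ) (p : HVertex N) : HEdge N → ZMod 2 :=
  fun e =>
    match e with
    | Sum.inl q =>
        if q = p ∨ q = p + (1, 0) ∨ q = p + (0, 1) ∨ q = p + (1, 1) then 1 else 0
    | Sum.inr q => if q.1 = p ∨ q.1 = p + (2, 0) then 1 else 0

/-- The face code: F₂-span of the indicator vectors of the face boundaries. -/
def Cface (N : ℕ) : Submodule (ZMod 2) (HEdge N → ZMod 2) :=
  Submodule.span (ZMod 2)
    { f | ∃ p : HVertex N, Even (p.1.val + p.2.val) ∧ f = faceBd N p }

lemma sum_mul_ite_or {α R : Type*} [Fintype α] [DecidableEq α] [NonAssocSemiring R] (t : α → R)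
    {a b : α} (hab : a ≠ b) : ∑ p, t p * (if p = a ∨ p = b then 1 else 0) = t a + t b := by
  simp_rw [mul_ite, mul_one, mul_zero]
  rw [← Finset.sum_filter]
  convert Finset.sum_pair hab using 2
  ext p; simp

lemma injOn_restrict_of_eq_zero {ι R M : Type*} [Ring R] [AddCommGroup M] [Module R M]
    (C : Submodule R (ι → M)) (p : ι → Prop) (h : ∀ z ∈ C, (∀ i, p i → z i = 0) → z = 0) :
    Set.InjOn (fun (x : ι → M) (i : {i // p i}) => x i) (C : Set (ι → M)) := fun x hx y hy hxy =>
  sub_eq_zero.mp <| h _ (C.sub_mem hx hy) fun i hi => by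
    simpa [sub_eq_zero] using congrFun hxy ⟨i, hi⟩

lemma sum_prod_le_one_of_injOn {κ ι α : Type*} [Fintype ι] [Fintype α] (f : ι → α → ℝ)
    (hf0 : ∀ i a, 0 ≤ f i a) (hf1 : ∀ i, ∑ a, f i a = 1) (T : Finset κ) {r : κ → ι → α}
    (hr : Set.InjOn r T) : ∑ x ∈ T, ∏ i, f i (r x i) ≤ 1 :=
  calc ∑ x ∈ T, ∏ i, f i (r x i) = ∑ y ∈ T.image r, ∏ i, f i ((y : ι → α) i) :=
        (Finset.sum_image (f := fun y => ∏ i, f i (y i)) hr).symm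
    _ ≤ ∑ y : ι → α, ∏ i, f i (y i) :=
      Finset.sum_le_univ_sum_of_nonneg fun _ => Finset.prod_nonneg fun i _ => hf0 i _
    _ = 1 := by rw [← Fintype.prod_sum]; simp [hf1]

section Overlap

variable {ι : Type} [Fintype ι]

lemma sum_norm_le_one_of_injOn {Φ : (ι → ZMod 2) → ℂ} (hΦ : IsProductState Φ) (p : ι → Prop)
    (S : Finset (ι → ZMod 2))
    (hp : Set.InjOn (fun (x : ι → ZMod 2) (i : {i // p i}) => x i) S)
    (hnp : Set.InjOn (fun (x : ι → ZMod 2) (i : {i // ¬ p i}) => x i) S) : ∑ x ∈ S, ‖Φ x‖ ≤ 1 := by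
  obtain ⟨φ, hφ, hΦx⟩ := hΦ
  have hφ' : ∀ i, ∑ v, ‖φ i v‖ ^ 2 = 1 := fun i => by rw [← hφ i]; exact Fin.sum_univ_two _
  set a : (ι → ZMod 2) → ℝ := fun x => ∏ i : {i // p i}, ‖φ i (x i)‖
  set b : (ι → ZMod 2) → ℝ := fun x => ∏ i : {i // ¬ p i}, ‖φ i (x i)‖
  have hab : ∀ x, ‖Φ x‖ = a x * b x := fun x => by
    rw [hΦx, norm_prod, ← Fintype.prod_subtype_mul_prod_subtype p]
  have ha : ∑ x ∈ S, a x ^ 2 ≤ 1 := by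
    simpa only [a, ← Finset.prod_pow] using
      sum_prod_le_one_of_injOn (fun (i : {i // p i}) v => ‖φ i v‖ ^ 2) (fun _ _ => by positivity)
        (fun i => hφ' i) S hp
  have hb : ∑ x ∈ S, b x ^ 2 ≤ 1 := by
    simpa only [b, ← Finset.prod_pow] using
      sum_prod_le_one_of_injOn (fun (i : {i // ¬ p i}) v => ‖φ i v‖ ^ 2) (fun _ _ => by positivity)
        (fun i => hφ' i) S hnp
  have hsq : (∑ x ∈ S, a x * b x) ^ 2 ≤ 1 :=
    (Finset.sum_mul_sq_le_sq_mul_sq S a b).trans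
      (mul_le_one₀ ha (Finset.sum_nonneg fun _ _ => sq_nonneg _) hb)
  simp only [hab]
  exact (pow_le_one_iff_of_nonneg (Finset.sum_nonneg fun x _ => (hab x) ▸ norm_nonneg _)
    two_ne_zero).mp hsq

theorem norm_qInner_le_of_injOn (p : ι → Prop) {ψ : (ι → ZMod 2) → ℂ} {M : ℝ}
    (hψ : ∀ x, ‖ψ x‖ ≤ M) (hp : Set.InjOn (fun x (i : {i // p i}) => x i) (Function.support ψ))
    (hnp : Set.InjOn (fun x (i : {i // ¬ p i}) => x i) (Function.support ψ))
    {Φ : (ι → ZMod 2) → ℂ} (hΦ : IsProductState Φ) : ‖qInner Φ ψ‖ ≤ M := by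
  set S := Finset.univ.filter fun x => ψ x ≠ 0
  have hS : (S : Set (ι → ZMod 2)) = Function.support ψ := by ext; simp [S]
  have hM : 0 ≤ M := (norm_nonneg _).trans (hψ 0)
  calc ‖qInner Φ ψ‖ ≤ ∑ x, ‖Φ x‖ * ‖ψ x‖ := by
        simpa [qInner] using norm_sum_le _ fun x => (starRingEnd ℂ) (Φ x) * ψ x
    _ = ∑ x ∈ S, ‖Φ x‖ * ‖ψ x‖ :=
        (Finset.sum_subset S.subset_univ fun x _ hx => by simp_all [S]).symm
    _ ≤ (∑ x ∈ S, ‖Φ x‖) * M := by rw [Finset.sum_mul]; gcongr; exact hψ _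
    _ ≤ M := mul_le_of_le_one_left hM
        (sum_norm_le_one_of_injOn hΦ p S (hS ▸ hp) (hS ▸ hnp))

lemma isProductState_basis (a : ι → ZMod 2) : IsProductState fun x => if x = a then 1 else 0 := by
  refine ⟨fun i v => if v = a i then 1 else 0, fun i => ?_, fun x => ?_⟩
  · rcases (by decide : ∀ c : ZMod 2, c = 0 ∨ c = 1) (a i) with h | h <;> simp [h]
  · rw [Finset.prod_boole]; simp [funext_iff]

lemma qInner_basis (a : ι → ZMod 2) (ψ : (ι → ZMod 2) → ℂ) :
    qInner (fun x => if x = a then 1 else 0) ψ = ψ a := by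
  simp [qInner]

theorem LambdaMax_eq_of_injOn (p : ι → Prop) {ψ : (ι → ZMod 2) → ℂ} (a : ι → ZMod 2)
    (hψ : ∀ x, ‖ψ x‖ ≤ ‖ψ a‖) (hp : Set.InjOn (fun x (i : {i // p i}) => x i) (Function.support ψ))
    (hnp : Set.InjOn (fun x (i : {i // ¬ p i}) => x i) (Function.support ψ)) :
    LambdaMax ψ = ‖ψ a‖ :=
  IsGreatest.csSup_eq ⟨⟨_, isProductState_basis a, by rw [qInner_basis]⟩,
    by rintro r ⟨Φ, hΦ, rfl⟩; exact norm_qInner_le_of_injOn p hψ hp hnp hΦ⟩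

lemma EG_eq_logb {ψ : (ι → ZMod 2) → ℂ} {K : ℝ} (hK : 0 ≤ K) (h : LambdaMax ψ = (√K)⁻¹) :
    EG ψ = Real.logb 2 K := by
  rw [EG, h, inv_pow, Real.sq_sqrt hK, Real.logb_inv, neg_neg]

end Overlap

section Parity

variable {N : ℕ}

lemma natCast_ne_zero_of_lt {k : ℕ} (hk : 0 < k) (hkN : k < N) : (k : ZMod N) ≠ 0 := by
  rw [Ne, ZMod.natCast_eq_zero_iff]
  exact fun h => absurd (Nat.le_of_dvd hk h) (by omega)

lemma one_ne_zero_of_one_lt (hN : 1 < N) : (1 : ZMod N) ≠ 0 := by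
  exact_mod_cast natCast_ne_zero_of_lt one_pos hN

lemma two_ne_zero_of_two_lt (hN : 2 < N) : (2 : ZMod N) ≠ 0 := by
  exact_mod_cast natCast_ne_zero_of_lt two_pos hN

def vertexParity (p : HVertex N) : ZMod 2 := ZMod.cast p.1 + ZMod.cast p.2

lemma vertexParity_add (h2 : 2 ∣ N) (p q : HVertex N) :
    vertexParity (p + q) = vertexParity p + vertexParity q := by
  simp only [vertexParity, Prod.fst_add, Prod.snd_add, ZMod.cast_add h2]
  ring

lemma vertexParity_one_zero (h2 : 2 ∣ N) : vertexParity ((1, 0) : HVertex N) = 1 := by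
  simp [vertexParity, ZMod.cast_one h2]

lemma vertexParity_zero_one (h2 : 2 ∣ N) : vertexParity ((0, 1) : HVertex N) = 1 := by
  simp [vertexParity, ZMod.cast_one h2]

lemma vertexParity_one_one (h2 : 2 ∣ N) : vertexParity ((1, 1) : HVertex N) = 0 := by
  simp [vertexParity, ZMod.cast_one h2, CharTwo.add_self_eq_zero]

lemma vertexParity_neg_one_one (h2 : 2 ∣ N) : vertexParity ((-1, 1) : HVertex N) = 0 := by
  simp [vertexParity, ZMod.cast_one h2, ZMod.cast_neg h2, CharTwo.neg_eq, CharTwo.add_self_eq_zero]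

lemma vertexParity_two_zero (h2 : 2 ∣ N) : vertexParity ((2, 0) : HVertex N) = 0 := by
  rw [show ((2, 0) : HVertex N) = (1, 0) + (1, 0) by ext <;> norm_num, vertexParity_add h2,
    vertexParity_one_zero h2, CharTwo.add_self_eq_zero]

lemma vertexParity_sub (h2 : 2 ∣ N) (p q : HVertex N) :
    vertexParity (p - q) = vertexParity p + vertexParity q := by
  simp only [vertexParity, Prod.fst_sub, Prod.snd_sub, ZMod.cast_sub h2, CharTwo.sub_eq_add]
  ring

lemma ne_add_of_vertexParity_ne (h2 : 2 ∣ N) {p q g : HVertex N}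
    (h : vertexParity q ≠ vertexParity p + vertexParity g) : q ≠ p + g :=
  fun h' => h (h' ▸ vertexParity_add h2 p g)

end Parity

section Boundary

variable {N : ℕ} [NeZero N]

lemma vertexParity_eq_zero_iff (p : HVertex N) : vertexParity p = 0 ↔ Even (p.1.val + p.2.val) := by
  rw [vertexParity, ZMod.cast_eq_val, ZMod.cast_eq_val, ← Nat.cast_add,
    ZMod.natCast_eq_zero_iff_even]

abbrev HFace (N : ℕ) := { p : HVertex N // Even (p.1.val + p.2.val) }

variable (N) in
def faceBoundary : (HFace N → ZMod 2) →ₗ[ZMod 2] (HEdge N → ZMod 2) :=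
  Fintype.linearCombination (ZMod 2) fun p => faceBd N p.1

lemma range_faceBoundary : LinearMap.range (faceBoundary N) = Cface N := by
  rw [faceBoundary, Fintype.range_linearCombination, Cface]
  congr 1
  ext f
  simp [eq_comm]

def extendByZero (u : HFace N → ZMod 2) (p : HVertex N) : ZMod 2 :=
  if h : Even (p.1.val + p.2.val) then u ⟨p, h⟩ else 0

lemma extendByZero_of_vertexParity_eq_zero (u : HFace N → ZMod 2) {p : HVertex N}
    (hp : vertexParity p = 0) : extendByZero u p = u ⟨p, (vertexParity_eq_zero_iff p).mp hp⟩ :=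
  dif_pos _

lemma faceBoundary_apply (u : HFace N → ZMod 2) (e : HEdge N) :
    faceBoundary N u e = ∑ p, extendByZero u p * faceBd N p e := by
  rw [faceBoundary, Fintype.linearCombination_apply, Finset.sum_apply,
    ← Fintype.sum_subtype_add_sum_subtype (fun p : HVertex N => Even (p.1.val + p.2.val))]
  have hodd : ∑ p : {p : HVertex N // ¬ Even (p.1.val + p.2.val)},
      extendByZero u p * faceBd N p e = 0 :=
    Finset.sum_eq_zero fun p _ => by simp [extendByZero, p.2]
  rw [hodd, add_zero]
  exact Finset.sum_congr rfl fun p _ => by simp [extendByZero, p.2]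

lemma faceBoundary_inl_of_even (h2 : 2 ∣ N) (hN : 2 < N) (u : HFace N → ZMod 2) {q : HVertex N}
    (hq : vertexParity q = 0) :
    faceBoundary N u (.inl q) = extendByZero u q + extendByZero u (q - (1, 1)) := by
  have hne : q ≠ q - (1, 1) := fun h =>
    one_ne_zero_of_one_lt (one_lt_two.trans hN) (congrArg Prod.fst (sub_eq_self.mp h.symm))
  rw [faceBoundary_apply, ← sum_mul_ite_or _ hne]
  refine Finset.sum_congr rfl fun p _ => ?_
  by_cases hp : vertexParity p = 0
  · have h10 : q ≠ p + (1, 0) :=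
      ne_add_of_vertexParity_ne h2 (by rw [hp, hq, vertexParity_one_zero h2]; decide)
    have h01 : q ≠ p + (0, 1) :=
      ne_add_of_vertexParity_ne h2 (by rw [hp, hq, vertexParity_zero_one h2]; decide)
    simp only [faceBd, h10, h01, false_or, eq_sub_iff_add_eq, or_congr eq_comm eq_comm]
  · simp [extendByZero, ← vertexParity_eq_zero_iff, hp]

lemma faceBoundary_inl_of_odd (h2 : 2 ∣ N) (hN : 2 < N) (u : HFace N → ZMod 2) {q : HVertex N}
    (hq : vertexParity q = 1) :
    faceBoundary N u (.inl q) = extendByZero u (q - (1, 0)) + extendByZero u (q - (0, 1)) := by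
  have hne : q - (1, 0) ≠ q - (0, 1) := fun h =>
    one_ne_zero_of_one_lt (one_lt_two.trans hN) (congrArg Prod.fst (sub_right_injective h))
  rw [faceBoundary_apply, ← sum_mul_ite_or _ hne]
  refine Finset.sum_congr rfl fun p _ => ?_
  by_cases hp : vertexParity p = 0
  · have h00 : q ≠ p := fun h => by rw [h, hp] at hq; exact zero_ne_one hq
    have h11 : q ≠ p + (1, 1) :=
      ne_add_of_vertexParity_ne h2 (by rw [hp, hq, vertexParity_one_one h2]; decide)
    simp only [faceBd, h00, h11, false_or, or_false, eq_sub_iff_add_eq, or_congr eq_comm eq_comm]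
  · simp [extendByZero, ← vertexParity_eq_zero_iff, hp]

lemma faceBoundary_inr (hN : 2 < N) (u : HFace N → ZMod 2) (q : HFace N) :
    faceBoundary N u (.inr q) = extendByZero u q.1 + extendByZero u (q.1 - (2, 0)) := by
  have hne : q.1 ≠ q.1 - (2, 0) := fun h =>
    two_ne_zero_of_two_lt hN (congrArg Prod.fst (sub_eq_self.mp h.symm))
  rw [faceBoundary_apply, ← sum_mul_ite_or _ hne]
  refine Finset.sum_congr rfl fun p _ => ?_
  simp only [faceBd, eq_sub_iff_add_eq, or_congr eq_comm eq_comm]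

end Boundary

section Periods

variable {N : ℕ} {β : Type*}

lemma vertexParity_nsmul (h2 : 2 ∣ N) (k : ℕ) (g : HVertex N) :
    vertexParity (k • g) = k • vertexParity g := by
  induction k with
  | zero => simp [vertexParity]
  | succ k ih => rw [succ_nsmul, vertexParity_add h2, ih, succ_nsmul]

def IsPeriod (t : HVertex N → β) (g : HVertex N) : Prop :=
  ∀ q, vertexParity q = 0 → t (q + g) = t q

lemma IsPeriod.nsmul (h2 : 2 ∣ N) {t : HVertex N → β} {g : HVertex N} (hg : vertexParity g = 0)
    (ht : IsPeriod t g) (k : ℕ) : IsPeriod t (k • g) := by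
  induction k with
  | zero => intro q _; simp
  | succ k ih =>
    intro q hq
    have hq' : vertexParity (q + k • g) = 0 := by
      rw [vertexParity_add h2, vertexParity_nsmul h2, hq, hg, smul_zero, add_zero]
    rw [succ_nsmul, ← add_assoc, ht _ hq', ih q hq]

variable [NeZero N]

lemma exists_eq_nsmul_add_nsmul (h2 : 2 ∣ N) {g : HVertex N} (hg2 : g.2 = 1)
    (hg : vertexParity g = 0) {q : HVertex N} (hq : vertexParity q = 0) :
    ∃ m j : ℕ, q = m • g + j • (2, 0) := by
  set r := q - q.2.val • g
  have hr2 : r.2 = 0 := by simp [r, hg2]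
  have hr : vertexParity r = 0 := by
    have := congrArg vertexParity (sub_add_cancel q (q.2.val • g))
    rwa [vertexParity_add h2, vertexParity_nsmul h2, hg, smul_zero, add_zero, hq] at this
  obtain ⟨j, hj⟩ : Even r.1.val := by simpa [hr2] using (vertexParity_eq_zero_iff r).mp hr
  refine ⟨q.2.val, j, ?_⟩
  rw [← sub_eq_iff_eq_add']
  ext
  · rw [← ZMod.natCast_zmod_val r.1, hj]; simp; ring
  · simp [hg2]

lemma IsPeriod.two_zero_of_row (h2 : 2 ∣ N) {t : HVertex N → β} {g : HVertex N} (hg2 : g.2 = 1)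
    (hg : vertexParity g = 0) (ht : IsPeriod t g) (r : ZMod N)
    (hr : ∀ q, vertexParity q = 0 → q.2 = r → t (q + (2, 0)) = t q) : IsPeriod t (2, 0) := by
  intro q hq
  set m := (r - q.2).val
  have hm : vertexParity (q + m • g) = 0 := by
    rw [vertexParity_add h2, vertexParity_nsmul h2, hq, hg, smul_zero, add_zero]
  have hq2 : vertexParity (q + (2, 0)) = 0 := by
    rw [vertexParity_add h2, hq, vertexParity_two_zero h2, add_zero]
  calc t (q + (2, 0)) = t (q + (2, 0) + m • g) := (ht.nsmul h2 hg m _ hq2).symm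
    _ = t (q + m • g + (2, 0)) := by rw [add_right_comm]
    _ = t (q + m • g) := hr _ hm (by simp [m, hg2])
    _ = t q := ht.nsmul h2 hg m q hq

lemma IsPeriod.apply_eq_apply_zero (h2 : 2 ∣ N) {t : HVertex N → β} {g : HVertex N}
    (hg2 : g.2 = 1) (hg : vertexParity g = 0) (ht : IsPeriod t g) (h20 : IsPeriod t (2, 0))
    {q : HVertex N} (hq : vertexParity q = 0) : t q = t 0 := by
  obtain ⟨m, j, rfl⟩ := exists_eq_nsmul_add_nsmul h2 hg2 hg hq
  have hm : vertexParity (0 + m • g) = 0 := by rw [zero_add, vertexParity_nsmul h2, hg, smul_zero]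
  calc t (m • g + j • (2, 0)) = t (0 + m • g + j • (2, 0)) := by rw [zero_add]
    _ = t (0 + m • g) := h20.nsmul h2 (vertexParity_two_zero h2) j _ hm
    _ = t 0 := ht.nsmul h2 hg m 0 (by simp [vertexParity])

end Periods

section FaceCode

variable {N : ℕ} [NeZero N]

def IsSplitEdge : HEdge N → Prop
  | .inl q => vertexParity q = 0
  | .inr q => q.1.2 ≠ 0

lemma faceBoundary_const (h2 : 2 ∣ N) (hN : 2 < N) (c : ZMod 2) :
    faceBoundary N (fun _ => c) = 0 := by
  have hc : ∀ {p : HVertex N}, vertexParity p = 0 → extendByZero (fun _ => c) p = c :=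
    fun hp => extendByZero_of_vertexParity_eq_zero _ hp
  funext e
  rcases e with q | q
  · rcases (by decide : ∀ a : ZMod 2, a = 0 ∨ a = 1) (vertexParity q) with hq | hq
    · rw [faceBoundary_inl_of_even h2 hN _ hq, hc hq,
        hc (by rw [vertexParity_sub h2, hq, vertexParity_one_one h2, add_zero]),
        CharTwo.add_self_eq_zero]
      rfl
    · rw [faceBoundary_inl_of_odd h2 hN _ hq,
        hc (by rw [vertexParity_sub h2, hq, vertexParity_one_zero h2, CharTwo.add_self_eq_zero]),
        hc (by rw [vertexParity_sub h2, hq, vertexParity_zero_one h2, CharTwo.add_self_eq_zero]),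
        CharTwo.add_self_eq_zero]
      rfl
  · have hq : vertexParity q.1 = 0 := (vertexParity_eq_zero_iff _).mpr q.2
    rw [faceBoundary_inr hN, hc hq,
      hc (by rw [vertexParity_sub h2, hq, vertexParity_two_zero h2, add_zero]),
      CharTwo.add_self_eq_zero]
    rfl

lemma eq_const_of_forall_extendByZero_eq (u : HFace N → ZMod 2)
    (h : ∀ q : HVertex N, vertexParity q = 0 → extendByZero u q = extendByZero u 0) :
    u = fun _ => extendByZero u 0 :=
  funext fun p => by
    have hp := (vertexParity_eq_zero_iff _).mpr p.2
    rw [← h p.1 hp, extendByZero_of_vertexParity_eq_zero u hp]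

lemma eq_const_of_isSplitEdge (h2 : 2 ∣ N) (hN : 2 < N) {u : HFace N → ZMod 2}
    (hu : ∀ e, IsSplitEdge e → faceBoundary N u e = 0) : u = fun _ => extendByZero u 0 := by
  have h11 : IsPeriod (extendByZero u) (1, 1) := fun q hq => by
    have hq' : vertexParity (q + (1, 1)) = 0 := by
      rw [vertexParity_add h2, hq, vertexParity_one_one h2, add_zero]
    have := hu (.inl (q + (1, 1))) hq'
    rwa [faceBoundary_inl_of_even h2 hN u hq', add_sub_cancel_right, CharTwo.add_eq_zero] at this
  have h20 : IsPeriod (extendByZero u) (2, 0) :=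
    h11.two_zero_of_row h2 rfl (vertexParity_one_one h2) 1 fun q hq hq1 => by
      have hq' : vertexParity (q + (2, 0)) = 0 := by
        rw [vertexParity_add h2, hq, vertexParity_two_zero h2, add_zero]
      have := hu (.inr ⟨q + (2, 0), (vertexParity_eq_zero_iff _).mp hq'⟩)
        (by simpa [IsSplitEdge, hq1] using one_ne_zero_of_one_lt (one_lt_two.trans hN))
      rwa [faceBoundary_inr hN, add_sub_cancel_right, CharTwo.add_eq_zero] at this
  exact eq_const_of_forall_extendByZero_eq u fun q hq =>
    h11.apply_eq_apply_zero h2 rfl (vertexParity_one_one h2) h20 hq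

lemma eq_const_of_not_isSplitEdge (h2 : 2 ∣ N) (hN : 2 < N) {u : HFace N → ZMod 2}
    (hu : ∀ e, ¬ IsSplitEdge e → faceBoundary N u e = 0) : u = fun _ => extendByZero u 0 := by
  have h11 : IsPeriod (extendByZero u) (-1, 1) := fun q hq => by
    have hq' : vertexParity (q + (0, 1)) = 1 := by
      rw [vertexParity_add h2, hq, vertexParity_zero_one h2, zero_add]
    have := hu (.inl (q + (0, 1))) (by simp [IsSplitEdge, hq'])
    rwa [faceBoundary_inl_of_odd h2 hN u hq', add_sub_cancel_right, add_sub_assoc,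
      show ((0, 1) - (1, 0) : HVertex N) = (-1, 1) by ext <;> simp, CharTwo.add_eq_zero] at this
  have h20 : IsPeriod (extendByZero u) (2, 0) :=
    h11.two_zero_of_row h2 rfl (vertexParity_neg_one_one h2) 0 fun q hq hq0 => by
      have hq' : vertexParity (q + (2, 0)) = 0 := by
        rw [vertexParity_add h2, hq, vertexParity_two_zero h2, add_zero]
      have := hu (.inr ⟨q + (2, 0), (vertexParity_eq_zero_iff _).mp hq'⟩)
        (by simp [IsSplitEdge, hq0])
      rwa [faceBoundary_inr hN, add_sub_cancel_right, CharTwo.add_eq_zero] at this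
  exact eq_const_of_forall_extendByZero_eq u fun q hq =>
    h11.apply_eq_apply_zero h2 rfl (vertexParity_neg_one_one h2) h20 hq

lemma injOn_restrict_isSplitEdge (h2 : 2 ∣ N) (hN : 2 < N) :
    Set.InjOn (fun (x : HEdge N → ZMod 2) (e : {e : HEdge N // IsSplitEdge e}) => x e)
      (Cface N : Set _) :=
  injOn_restrict_of_eq_zero _ _ fun z hz h0 => by
    obtain ⟨u, rfl⟩ := range_faceBoundary (N := N) ▸ hz
    rw [eq_const_of_isSplitEdge h2 hN h0, faceBoundary_const h2 hN]

lemma injOn_restrict_not_isSplitEdge (h2 : 2 ∣ N) (hN : 2 < N) :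
    Set.InjOn (fun (x : HEdge N → ZMod 2) (e : {e : HEdge N // ¬ IsSplitEdge e}) => x e)
      (Cface N : Set _) :=
  injOn_restrict_of_eq_zero _ _ fun z hz h0 => by
    obtain ⟨u, rfl⟩ := range_faceBoundary (N := N) ▸ hz
    rw [eq_const_of_not_isSplitEdge h2 hN h0, faceBoundary_const h2 hN]

lemma ker_faceBoundary (h2 : 2 ∣ N) (hN : 2 < N) :
    LinearMap.ker (faceBoundary N) = (ZMod 2) ∙ fun _ => 1 := by
  refine le_antisymm (fun u hu => ?_) ((Submodule.span_singleton_le_iff_mem _ _).mpr ?_)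
  · rw [eq_const_of_isSplitEdge h2 hN fun e _ => congrFun (LinearMap.mem_ker.mp hu) e]
    exact Submodule.mem_span_singleton.mpr ⟨extendByZero u 0, by ext; simp⟩
  · exact faceBoundary_const h2 hN 1

lemma card_hFace (h2 : 2 ∣ N) : Fintype.card (HFace N) = N ^ 2 / 2 := by
  have hodd : Fintype.card {p : HVertex N // ¬ Even (p.1.val + p.2.val)} = Fintype.card (HFace N) :=
    Fintype.card_congr <| ((Equiv.addRight (1, 0)).subtypeEquiv fun p => by
      rw [← vertexParity_eq_zero_iff, ← vertexParity_eq_zero_iff, Equiv.coe_addRight,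
        vertexParity_add h2, vertexParity_one_zero h2]
      exact (by decide : ∀ a : ZMod 2, a = 0 ↔ ¬ a + 1 = 0) _).symm
  have hsum : Fintype.card (HFace N) + Fintype.card {p : HVertex N // ¬ Even (p.1.val + p.2.val)}
      = N * N := by
    rw [← Fintype.card_sum, Fintype.card_congr (Equiv.sumCompl _), Fintype.card_prod, ZMod.card]
  rw [sq]
  generalize N * N = M at *
  omega

lemma card_Cface (h2 : 2 ∣ N) (hN : 2 < N) : Nat.card (Cface N) = 2 ^ (N ^ 2 / 2 - 1) := by
  have hrank := LinearMap.finrank_range_add_finrank_ker (faceBoundary N)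
  rw [ker_faceBoundary h2 hN, finrank_span_singleton, Module.finrank_fintype_fun_eq_card,
    card_hFace h2, range_faceBoundary] at hrank
  · rw [Module.natCard_eq_pow_finrank (K := ZMod 2), Nat.card_zmod]
    congr 1
    omega
  · exact fun h => one_ne_zero (congrFun h ⟨0, by simp⟩)

end FaceCode

theorem double_semion_GE_general
    (N : ℕ) [NeZero N] (h4 : N % 4 = 0)
    (ψ' : (HEdge N → ZMod 2) → ℂ)
    (hsupp : ∀ x, x ∉ (Cface N : Set (HEdge N → ZMod 2)) → ψ' x = 0)
    (hmod : ∀ x ∈ (Cface N : Set (HEdge N → ZMod 2)),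
      ‖ψ' x‖ = (Real.sqrt (Nat.card (Cface N)))⁻¹) :
    LambdaMax ψ' = (Real.sqrt (Nat.card (Cface N)))⁻¹ ∧
    EG ψ' = (N : ℝ) ^ 2 / 2 - 1 := by
  have h2 : 2 ∣ N := by omega
  have hN : 2 < N := by have := NeZero.ne N; omega
  have hsupp' : Function.support ψ' ⊆ Cface N := fun x hx => by_contra (hx ∘ hsupp x)
  have hmax : ∀ x, ‖ψ' x‖ ≤ ‖ψ' 0‖ := fun x => by
    by_cases hx : x ∈ (Cface N : Set _)
    · rw [hmod x hx, hmod 0 (Cface N).zero_mem]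
    · rw [hsupp x hx, norm_zero]; exact norm_nonneg _
  have hLam : LambdaMax ψ' = (Real.sqrt (Nat.card (Cface N)))⁻¹ := by
    rw [← hmod 0 (Cface N).zero_mem]
    exact LambdaMax_eq_of_injOn IsSplitEdge 0 hmax
      ((injOn_restrict_isSplitEdge h2 hN).mono hsupp')
      ((injOn_restrict_not_isSplitEdge h2 hN).mono hsupp')
  refine ⟨hLam, ?_⟩
  have hdvd : 2 ∣ N ^ 2 := dvd_pow h2 two_ne_zero
  have hpos : 1 ≤ N ^ 2 / 2 := Nat.le_div_iff_mul_le two_pos |>.mpr (by nlinarith)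
  rw [EG_eq_logb (Nat.cast_nonneg _) hLam, card_Cface h2 hN, Nat.cast_pow, Nat.cast_ofNat,
    Real.logb_pow, Real.logb_self_eq_one one_lt_two, mul_one, Nat.cast_sub hpos,
    Nat.cast_div hdvd two_ne_zero]
  push_cast
  ring

/-- double semion theorem: any state ψ' supported on the face code
C_face whose nonzero amplitudes all have modulus |C_face|^{-1/2} (in particular the
double semion ground state |+,+⟩_DS, whose amplitudes are (−1)^{X_c}·|C_face|^{-1/2}
on C_face) has Λ_max = |C_face|^{-1/2} and geometric entanglement of spins
E_G = n_p − 1, with n_p = N²/2. -/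
theorem double_semion_GE
    (N : ℕ) [NeZero N] (hpos : 0 < N) (h4 : N % 4 = 0)
    (ψ' : (HEdge N → ZMod 2) → ℂ)
    (hsupp : ∀ x, x ∉ (Cface N : Set (HEdge N → ZMod 2)) → ψ' x = 0)
    (hmod : ∀ x ∈ (Cface N : Set (HEdge N → ZMod 2)),
      ‖ψ' x‖ = (Real.sqrt (Nat.card (Cface N)))⁻¹) :
    LambdaMax ψ' = (Real.sqrt (Nat.card (Cface N)))⁻¹ ∧
    EG ψ' = (N : ℝ) ^ 2 / 2 - 1 :=
  double_semion_GE_general N h4 ψ' hsupp hmod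

end GeomEnt
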